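/- arXiv:2011.04046 — 5 statements merged into one kernel-verified Lean document; each statement's English description precedes it below -/
import Mathlib

section
/- Let k be a field with char(k) ≠ 2 and let f : 𝔸ⁿ → 𝔸ⁿ be a polynomial map vanishing at 0 with an isolated zero at 0 such that dim_k Q₀(f) ≥ 2. Then for every k-linear map φ : Q₀(f) → k with φ(E) = 1, the associated quadratic form p ↦ φ(p·p) on Q₀(f) is isotropic, i.e., there exists a nonzero element p ∈ Q₀(f) with φ(p·p) = 0. (Since β_φ is nondegenerate, this is equivalent to saying that the hyperbolic plane ℍ is an orthogonal direct summand of the EKL form w₀(f).) -/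
open MvPolynomial Module

namespace EKL

variable (k : Type) [Field k]

/-- The submonoid of polynomials with nonzero constant term (the complement of
the maximal ideal at the origin). -/
def S (n : ℕ) : Submonoid (MvPolynomial (Fin n) k) where
  carrier := {p | constantCoeff p ≠ 0}
  mul_mem' := by
    intro a b ha hb
    simp only [Set.mem_setOf_eq, map_mul] at *
    exact mul_ne_zero ha hb
  one_mem' := by simp

/-- The local ring P₀ of affine n-space at the origin. -/
abbrev Loc (n : ℕ) := Localization (S k n)

/-- The maximal ideal 𝔪 = (x₁,…,xₙ) of the polynomial ring. -/
noncomputable def mIdeal (n : ℕ) : Ideal (MvPolynomial (Fin n) k) :=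
  Ideal.span (Set.range MvPolynomial.X)

/-- The ideal (f₁,…,fₙ)P₀. -/
noncomputable def idealOf {n : ℕ} (f : Fin n → MvPolynomial (Fin n) k) : Ideal (Loc k n) :=
  Ideal.span (Set.range fun i => algebraMap (MvPolynomial (Fin n) k) (Loc k n) (f i))

/-- The local algebra Q₀(f) of f at the origin. -/
abbrev Q0 {n : ℕ} (f : Fin n → MvPolynomial (Fin n) k) := Loc k n ⧸ idealOf k f

/-- The canonical ring homomorphism P → Q₀(f). -/
noncomputable def toQ0 {n : ℕ} (f : Fin n → MvPolynomial (Fin n) k) :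
    MvPolynomial (Fin n) k →+* Q0 k f :=
  (Ideal.Quotient.mk (idealOf k f)).comp (algebraMap _ _)

/-- `a` is a matrix of polynomials with fᵢ = Σⱼ aᵢⱼ xⱼ; the distinguished socle
element E(f) is then the image in Q₀(f) of det a. -/
def IsSocleMatrix {n : ℕ} (f : Fin n → MvPolynomial (Fin n) k)
    (a : Matrix (Fin n) (Fin n) (MvPolynomial (Fin n) k)) : Prop :=
  ∀ i, f i = ∑ j, a i j * MvPolynomial.X j

/-- The bilinear form β_φ(p,q) = φ(p·q). -/
def beta {V : Type} [CommRing V] [Algebra k V] (φ : V →ₗ[k] k) :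
    V →ₗ[k] V →ₗ[k] k :=
  LinearMap.mk₂ k (fun p q => φ (p * q))
    (fun m₁ m₂ q => by simp [add_mul])
    (fun c m q => by simp [smul_mul_assoc])
    (fun m q₁ q₂ => by simp [mul_add])
    (fun c m q => by simp [mul_smul_comm])

/-- Isometry of bilinear forms (with explicit carrier types). -/
def Isometric (V W : Type) [AddCommGroup V] [Module k V] [AddCommGroup W] [Module k W]
    (B₁ : V →ₗ[k] V →ₗ[k] k) (B₂ : W →ₗ[k] W →ₗ[k] k) : Prop :=
  ∃ e : V ≃ₗ[k] W, ∀ v w, B₂ (e v) (e w) = B₁ v w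

/-- The diagonal bilinear form ⟨c₁,…,c_m⟩ on kᵐ. -/
def diagForm (m : ℕ) (c : Fin m → k) : (Fin m → k) →ₗ[k] (Fin m → k) →ₗ[k] k :=
  LinearMap.mk₂ k (fun v w => ∑ i, c i * v i * w i)
    (fun v v' w => by
      simp only [Pi.add_apply]
      rw [← Finset.sum_add_distrib]
      exact Finset.sum_congr rfl fun i _ => by ring)
    (fun a v w => by
      simp only [Pi.smul_apply, smul_eq_mul, Finset.mul_sum]
      exact Finset.sum_congr rfl fun i _ => by ring)
    (fun v w w' => by
      simp only [Pi.add_apply]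
      rw [← Finset.sum_add_distrib]
      exact Finset.sum_congr rfl fun i _ => by ring)
    (fun a v w => by
      simp only [Pi.smul_apply, smul_eq_mul, Finset.mul_sum]
      exact Finset.sum_congr rfl fun i _ => by ring)

/-- Diagonal coefficients of r copies of the hyperbolic plane ℍ = ⟨1,−1⟩. -/
def hypDiag (r : ℕ) : Fin (2 * r) → k := fun i => if i.val % 2 = 0 then 1 else -1

/-!
By Cramer's rule `det a · xⱼ` lies in `(f₁,…,fₙ)`, so `E · 𝔪 = 0` in `Q₀(f)`. If `det a` had a
nonzero constant term it would be a unit of `P₀`, all `xⱼ` would vanish in `Q₀(f)` and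
`Q₀(f) = k`. So when `dim Q₀(f) ≥ 2` we have `E ∈ 𝔪`, hence `E² = 0`, and `E` itself is isotropic,
being nonzero because `φ(E) = 1`.
-/

variable {k}

theorem det_mul_mem_span_of_eq_mulVec {R ι : Type*} [CommRing R] [Fintype ι] [DecidableEq ι]
    {A : Matrix ι ι R} {x y : ι → R} (h : y = A.mulVec x) (j : ι) :
    A.det * x j ∈ Ideal.span (Set.range y) := by
  have hadj : A.adjugate.mulVec y = A.det • x := by
    rw [h, Matrix.mulVec_mulVec, Matrix.adjugate_mul, Matrix.smul_mulVec, Matrix.one_mulVec]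
  refine Ideal.mem_span_range_iff_exists_fun.2 ⟨fun i => A.adjugate j i, ?_⟩
  simpa [Matrix.mulVec, dotProduct] using congrFun hadj j

theorem mem_mIdeal_of_constantCoeff_eq_zero {n : ℕ} {g : MvPolynomial (Fin n) k}
    (hg : constantCoeff g = 0) : g ∈ mIdeal k n := by
  rw [mIdeal, ← Set.image_univ, mem_ideal_span_X_image]
  intro m hm
  by_contra! hm0
  have : m = 0 := Finsupp.ext fun i => hm0 i (Set.mem_univ i)
  rw [MvPolynomial.mem_support_iff, this, ← constantCoeff_eq] at hm
  exact hm hg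

theorem toQ0_eq_zero_of_mem_span {n : ℕ} {f : Fin n → MvPolynomial (Fin n) k}
    {g : MvPolynomial (Fin n) k} (hg : g ∈ Ideal.span (Set.range f)) : toQ0 k f g = 0 := by
  refine (Ideal.span_le.2 (Set.range_subset_iff.2 fun i => ?_) hg : g ∈ RingHom.ker (toQ0 k f))
  exact Ideal.Quotient.eq_zero_iff_mem.2 (Ideal.subset_span ⟨i, rfl⟩)

theorem toQ0_det_mul_eq_zero {n : ℕ} {f : Fin n → MvPolynomial (Fin n) k}
    {A : Matrix (Fin n) (Fin n) (MvPolynomial (Fin n) k)} (hA : IsSocleMatrix k f A)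
    {g : MvPolynomial (Fin n) k} (hg : g ∈ mIdeal k n) : toQ0 k f (A.det * g) = 0 := by
  have hf : f = A.mulVec X := funext fun i => by simpa [Matrix.mulVec, dotProduct] using hA i
  obtain ⟨c, rfl⟩ := Ideal.mem_span_range_iff_exists_fun.1 hg
  refine toQ0_eq_zero_of_mem_span ?_
  rw [Finset.mul_sum]
  refine Ideal.sum_mem _ fun j _ => ?_
  rw [mul_left_comm]
  exact Ideal.mul_mem_left _ _ (det_mul_mem_span_of_eq_mulVec hf j)

theorem toQ0_eq_algebraMap_comp_constantCoeff {n : ℕ} {f : Fin n → MvPolynomial (Fin n) k}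
    (hX : ∀ j, toQ0 k f (X j) = 0) : toQ0 k f = (algebraMap k (Q0 k f)).comp constantCoeff := by
  refine MvPolynomial.ringHom_ext (fun c => ?_) fun j => ?_
  · rw [toQ0, RingHom.comp_apply, ← MvPolynomial.algebraMap_eq, ← IsScalarTower.algebraMap_apply]
    simp
  · simp [hX j]

theorem algebraMap_surjective_of_toQ0_X {n : ℕ} {f : Fin n → MvPolynomial (Fin n) k}
    (hX : ∀ j, toQ0 k f (X j) = 0) :
    Function.Surjective (algebraMap k (Q0 k f) : k →+* Q0 k f) := by
  let ev : Loc k n →+* k :=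
    IsLocalization.lift (M := S k n) (g := constantCoeff) fun s => isUnit_iff_ne_zero.2 s.2
  have hmk : Ideal.Quotient.mk (idealOf k f) = (algebraMap k (Q0 k f)).comp ev :=
    IsLocalization.ringHom_ext (S k n) <| by
      rw [RingHom.comp_assoc, IsLocalization.lift_comp, ← toQ0_eq_algebraMap_comp_constantCoeff hX]
      rfl
  intro w
  obtain ⟨z, rfl⟩ := Ideal.Quotient.mk_surjective w
  exact ⟨ev z, by rw [hmk]; rfl⟩

theorem stmt0_general (n : ℕ) (f : Fin n → MvPolynomial (Fin n) k)
    (hdim : 2 ≤ Module.finrank k (Q0 k f))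
    (A : Matrix (Fin n) (Fin n) (MvPolynomial (Fin n) k)) (hA : IsSocleMatrix k f A)
    (φ : Q0 k f →ₗ[k] k) (hφ : φ (toQ0 k f A.det) = 1) :
    ∃ p : Q0 k f, p ≠ 0 ∧ φ (p * p) = 0 := by
  have hE : toQ0 k f A.det ≠ 0 := fun h => by simp [h] at hφ
  by_cases hc : constantCoeff A.det = 0
  · refine ⟨toQ0 k f A.det, hE, ?_⟩
    rw [← map_mul, toQ0_det_mul_eq_zero hA (mem_mIdeal_of_constantCoeff_eq_zero hc), map_zero]
  · have hunit : IsUnit (toQ0 k f A.det) :=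
      (IsLocalization.map_units (Loc k n) (⟨A.det, hc⟩ : S k n)).map (Ideal.Quotient.mk _)
    have hX : ∀ j, toQ0 k f (X j) = 0 := fun j =>
      (hunit.mul_right_eq_zero (M₀ := Q0 k f)).1 <| (map_mul (toQ0 k f) _ _).symm.trans <|
        toQ0_det_mul_eq_zero hA (Ideal.subset_span ⟨j, rfl⟩)
    have hsurj := algebraMap_surjective_of_toQ0_X hX
    have : finrank k (Q0 k f) ≤ 1 := finrank_le_one 1 fun w => (hsurj w).imp fun c hc => by
      rw [← hc, Algebra.algebraMap_eq_smul_one]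
    omega

theorem stmt0 (hchar : ringChar k ≠ 2) (n : ℕ) (f : Fin n → MvPolynomial (Fin n) k)
    (hf0 : ∀ i, constantCoeff (f i) = 0)
    (hfd : FiniteDimensional k (Q0 k f))
    (hdim : 2 ≤ Module.finrank k (Q0 k f))
    (A : Matrix (Fin n) (Fin n) (MvPolynomial (Fin n) k)) (hA : IsSocleMatrix k f A)
    (φ : Q0 k f →ₗ[k] k) (hφ : φ (toQ0 k f A.det) = 1) :
    ∃ p : Q0 k f, p ≠ 0 ∧ φ (p * p) = 0 :=
  stmt0_general n f hdim A hA φ hφ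

end EKL
end

section
/- Let k be a field with char(k) ≠ 2, let a ∈ k^×, and let f : 𝔸¹ → 𝔸¹ be the map f(x) = axⁿ with n ≥ 2. Then Q₀(f) ≅ k[x]/(xⁿ), and for any k-linear φ : Q₀(f) → k with φ(E) = 1, the symmetric bilinear form β_φ is isometric to the orthogonal sum of n/2 copies of the hyperbolic plane ℍ when n is even, and to the orthogonal sum of (n−1)/2 copies of ℍ together with ⟨a⟩ when n is odd. -/
open MvPolynomial Module

namespace EKL

variable (k : Type) [Field k]

/-!
Evaluation at a nilpotent element inverts every germ with nonzero constant term, so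
`Q₀(a xᵐ) ≅ k[θ]/(θ ^ m)` with `E ↦ a θ ^ (m - 1)`, and the functional `ψ` transported from `φ`
has `ψ (θ ^ (m - 1)) = a⁻¹`. Since `2` is invertible, a unit `p = 1 + θ q` can be chosen, by
downward induction on the exponent, with `ψ (p ^ 2 θ ^ s) = 0` for `s < m - 1`. In the basis
`p θ ^ s` the Gram matrix of `β_ψ` is then `a⁻¹` times the antidiagonal one: each pair
`p θ ^ s, p θ ^ (m - 1 - s)` spans a hyperbolic plane, and for odd `m = 2r + 1` the middle vector
`a p θ ^ r` has square `a`.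
-/

variable {k}

section LocalAlgebra

variable {σ R : Type*} [CommRing R] [Algebra k R]

theorem isNilpotent_aeval_sub_constantCoeff {x : σ → R} (hx : ∀ i, IsNilpotent (x i))
    (p : MvPolynomial σ k) : IsNilpotent (aeval x p - algebraMap k R (constantCoeff p)) := by
  induction p using MvPolynomial.induction_on with
  | C c => simp
  | add p q hp hq => simpa [add_sub_add_comm] using (Commute.all _ _).isNilpotent_add hp hq
  | mul_X p i _ => simpa using (Commute.all _ _).isNilpotent_mul_left (hx i)

theorem isUnit_aeval_of_constantCoeff_ne_zero {x : σ → R} (hx : ∀ i, IsNilpotent (x i))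
    {p : MvPolynomial σ k} (hp : constantCoeff p ≠ 0) : IsUnit (aeval x p) := by
  simpa using (isNilpotent_aeval_sub_constantCoeff hx p).isUnit_add_left_of_commute
    ((isUnit_iff_ne_zero.mpr hp).map (algebraMap k R)) (Commute.all _ _)

variable {n : ℕ} {f : Fin n → MvPolynomial (Fin n) k}

theorem toQ0_apply_self (i : Fin n) : toQ0 k f (f i) = 0 :=
  Ideal.Quotient.eq_zero_iff_mem.mpr (Ideal.subset_span ⟨i, rfl⟩)

noncomputable def Q0.lift (x : Fin n → R) (hx : ∀ i, IsNilpotent (x i))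
    (hf : ∀ i, aeval x (f i) = 0) : Q0 k f →ₐ[k] R :=
  Ideal.Quotient.liftₐ (idealOf k f)
    (IsLocalization.liftAlgHom (M := S k n) (f := aeval x)
      fun s => isUnit_aeval_of_constantCoeff_ne_zero hx s.2) fun p hp => by
    refine (Ideal.span_le (I := RingHom.ker _)).mpr ?_ hp
    rintro _ ⟨i, rfl⟩
    simp [IsLocalization.lift_eq, hf i]

theorem Q0.lift_toQ0 (x : Fin n → R) (hx : ∀ i, IsNilpotent (x i))
    (hf : ∀ i, aeval x (f i) = 0) (p : MvPolynomial (Fin n) k) :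
    Q0.lift x hx hf (toQ0 k f p) = aeval x p :=
  IsLocalization.lift_eq _ p

theorem Q0.algHom_ext {g h : Q0 k f →ₐ[k] R}
    (hgh : ∀ i, g (toQ0 k f (X i)) = h (toQ0 k f (X i))) : g = h := by
  refine AlgHom.coe_ringHom_injective <| Ideal.Quotient.ringHom_ext <|
    IsLocalization.ringHom_ext (S k n) <| MvPolynomial.ringHom_ext (fun c => ?_) hgh
  exact (g.commutes c).trans (h.commutes c).symm

end LocalAlgebra

section Monomial

variable {a : k} {m : ℕ}

theorem finrank_adjoinRoot_X_pow :
    finrank k (AdjoinRoot (Polynomial.X ^ m : Polynomial k)) = m := by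
  rw [(AdjoinRoot.powerBasis (pow_ne_zero m Polynomial.X_ne_zero)).finrank]
  exact Polynomial.natDegree_X_pow m

instance : FiniteDimensional k (AdjoinRoot (Polynomial.X ^ m : Polynomial k)) :=
  (AdjoinRoot.powerBasis (pow_ne_zero m Polynomial.X_ne_zero)).finite

theorem root_X_pow_pow_eq_zero :
    AdjoinRoot.root (Polynomial.X ^ m : Polynomial k) ^ m = 0 := by
  simpa using AdjoinRoot.eval₂_root (Polynomial.X ^ m : Polynomial k)

theorem toQ0_X_pow_eq_zero (ha : a ≠ 0) : toQ0 k ![C a * X 0 ^ m] (X 0) ^ m = 0 := by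
  have hunit : IsUnit (toQ0 k ![C a * X 0 ^ m] (C a)) :=
    ((isUnit_iff_ne_zero.mpr ha).map C).map _
  refine (hunit.mul_right_eq_zero (M₀ := Q0 k _)).mp ?_
  rw [← map_pow, ← map_mul]
  exact toQ0_apply_self 0

noncomputable def equivAdjoinRootXPow (ha : a ≠ 0) :
    Q0 k ![C a * X 0 ^ m] ≃ₐ[k] AdjoinRoot (Polynomial.X ^ m : Polynomial k) :=
  AlgEquiv.ofAlgHom
    (Q0.lift (fun _ => AdjoinRoot.root _) (fun _ => .mk _ m root_X_pow_pow_eq_zero)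
      (fun i => by fin_cases i; simp [root_X_pow_pow_eq_zero]))
    (AdjoinRoot.liftAlgHom _ (Algebra.ofId k _) (toQ0 k _ (X 0)) <| by
      rw [Polynomial.eval₂_X_pow]; exact toQ0_X_pow_eq_zero ha)
    (AdjoinRoot.algHom_ext <| by
      simpa using (Q0.lift_toQ0 _ _ _ (X (0 : Fin 1))).trans (aeval_X _ _))
    (Q0.algHom_ext (R := Q0 k ![C a * X 0 ^ m]) fun i => by
      obtain rfl : i = (0 : Fin 1) := Subsingleton.elim _ _
      simp only [AlgHom.coe_comp, Function.comp_apply]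
      rw [Q0.lift_toQ0, aeval_X, AdjoinRoot.liftAlgHom_root, AlgHom.id_apply])

theorem equivAdjoinRootXPow_toQ0 (ha : a ≠ 0) (p : MvPolynomial (Fin 1) k) :
    equivAdjoinRootXPow (m := m) ha (toQ0 k _ p) = aeval (fun _ => AdjoinRoot.root _) p := by
  simp only [equivAdjoinRootXPow, AlgEquiv.ofAlgHom_apply]
  exact Q0.lift_toQ0 _ _ _ p

theorem IsSocleMatrix.det_eq_C_mul_X_pow (hm : 1 ≤ m)
    {A : Matrix (Fin 1) (Fin 1) (MvPolynomial (Fin 1) k)}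
    (hA : IsSocleMatrix k ![C a * X 0 ^ m] A) : A.det = C a * X 0 ^ (m - 1) := by
  refine Matrix.det_fin_one A ▸ mul_right_cancel₀ (X_ne_zero (0 : Fin 1)) ?_
  rw [mul_assoc, ← pow_succ, Nat.sub_add_cancel hm]
  simpa using (hA 0).symm

end Monomial

section Forms

variable {V W U : Type} [AddCommGroup V] [Module k V] [AddCommGroup W] [Module k W]
  [AddCommGroup U] [Module k U]

theorem Isometric.trans {B₁ : V →ₗ[k] V →ₗ[k] k} {B₂ : W →ₗ[k] W →ₗ[k] k}
    {B₃ : U →ₗ[k] U →ₗ[k] k} (h₁₂ : Isometric k V W B₁ B₂) (h₂₃ : Isometric k W U B₂ B₃) :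
    Isometric k V U B₁ B₃ := by
  obtain ⟨e, he⟩ := h₁₂
  obtain ⟨e', he'⟩ := h₂₃
  exact ⟨e.trans e', fun v w => (he' _ _).trans (he v w)⟩

theorem isometric_beta_algEquiv {A A' : Type} [CommRing A] [Algebra k A] [CommRing A']
    [Algebra k A'] (e : A ≃ₐ[k] A') (φ : A →ₗ[k] k) :
    Isometric k A A' (beta k φ) (beta k (φ ∘ₗ e.symm.toLinearMap)) :=
  ⟨e.toLinearEquiv, fun v w => by simp [beta, ← map_mul]⟩

theorem isometric_diagForm_of_orthogonal [FiniteDimensional k V] {M : ℕ}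
    (hrank : finrank k V = M) (B : V →ₗ[k] V →ₗ[k] k) {c : Fin M → k} (hc : ∀ i, c i ≠ 0)
    (u : Fin M → V) (hu : ∀ i j, B (u i) (u j) = if i = j then c i else 0) :
    Isometric k V (Fin M → k) B (diagForm k M c) := by
  have hli : LinearIndependent k u :=
    LinearMap.BilinForm.linearIndependent_of_iIsOrtho (B := B)
      (fun i j hij => (hu i j).trans (if_neg hij)) (fun i => by simpa [hu] using hc i)
  let bu := basisOfLinearIndependentOfCardEqFinrank' u hli (by simp [hrank])
  suffices (diagForm k M c).compl₁₂ bu.equivFun.toLinearMap bu.equivFun.toLinearMap = B from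
    ⟨bu.equivFun, fun v w => by rw [← this]; rfl⟩
  refine LinearMap.ext_basis bu bu fun i j => ?_
  have hbu : ∀ i, bu i = u i := fun i => by simp [bu]
  conv_rhs => rw [hbu, hbu, hu]
  by_cases hij : i = j
  · subst hij
    simp [diagForm, Finsupp.single_apply]
  · simp [diagForm, Finsupp.single_apply, hij]

end Forms

section Antidiagonal

variable {V : Type} [AddCommGroup V] [Module k V] (B : V →ₗ[k] V →ₗ[k] k) {m r : ℕ} {c : k}

theorem hypDiag_ne_zero (i : Fin (2 * r)) : hypDiag k r i ≠ 0 := by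
  unfold hypDiag; split_ifs <;> simp

theorem hypDiag_eq_neg_of_div_two_eq {i j : Fin (2 * r)} (hij : i ≠ j)
    (h : (i : ℕ) / 2 = j / 2) : hypDiag k r j = -hypDiag k r i := by
  have : (i : ℕ) % 2 ≠ j % 2 := fun h' => hij (Fin.ext (by omega))
  unfold hypDiag; split_ifs <;> first | omega | simp

/-- If `B (b s) (b t) = c` exactly when `s + t + 1 = m`, then `b s` and `b (m - 1 - s)` are an
isotropic pair, and `b s ± b (m - 1 - s) / (2c)` are orthogonal of squares `±1`. -/
noncomputable def hyperbolicFamily (m r : ℕ) (c : k) (b : ℕ → V) (i : Fin (2 * r)) : V :=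
  b (i / 2) + (hypDiag k r i / (2 * c)) • b (m - 1 - i / 2)

theorem apply_hyperbolicFamily (h2 : (2 : k) ≠ 0) (hc : c ≠ 0) (hrm : 2 * r ≤ m) {b : ℕ → V}
    (hb : ∀ s t, B (b s) (b t) = if s + t + 1 = m then c else 0) (i j : Fin (2 * r)) :
    B (hyperbolicFamily m r c b i) (hyperbolicFamily m r c b j) =
      if i = j then hypDiag k r i else 0 := by
  have hi := i.isLt
  have hj := j.isLt
  have hbb : ¬((i : ℕ) / 2 + j / 2 + 1 = m) := by omega
  have hb'b' : ¬(m - 1 - i / 2 + (m - 1 - j / 2) + 1 = m) := by omega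
  simp only [hyperbolicFamily, map_add, map_smul, LinearMap.add_apply, LinearMap.smul_apply, hb,
    smul_eq_mul, hbb, hb'b', if_false]
  by_cases hs : (i : ℕ) / 2 = j / 2
  · have hbb' : (i : ℕ) / 2 + (m - 1 - j / 2) + 1 = m := by omega
    have hb'b : m - 1 - i / 2 + j / 2 + 1 = m := by omega
    simp only [hbb', hb'b, if_true]
    by_cases hij : i = j
    · subst hij
      rw [if_pos rfl]
      field_simp
      ring
    · rw [if_neg hij, hypDiag_eq_neg_of_div_two_eq hij hs]
      ring
  · have hbb' : ¬((i : ℕ) / 2 + (m - 1 - j / 2) + 1 = m) := by omega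
    have hb'b : ¬(m - 1 - i / 2 + j / 2 + 1 = m) := by omega
    have hij : i ≠ j := fun h => hs (by rw [h])
    simp only [hbb', hb'b, hij, if_false]
    ring

variable [FiniteDimensional k V] {b : ℕ → V}

theorem isometric_hyperbolic_of_antidiagonal (h2 : (2 : k) ≠ 0) (hc : c ≠ 0)
    (hrank : finrank k V = 2 * r) (hb : ∀ s t, B (b s) (b t) = if s + t + 1 = 2 * r then c else 0) :
    Isometric k V (Fin (2 * r) → k) B (diagForm k (2 * r) (hypDiag k r)) :=
  isometric_diagForm_of_orthogonal hrank B hypDiag_ne_zero _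
    (apply_hyperbolicFamily B h2 hc le_rfl hb)

theorem isometric_hyperbolic_append_of_antidiagonal (h2 : (2 : k) ≠ 0) (hc : c ≠ 0)
    (hrank : finrank k V = 2 * r + 1)
    (hb : ∀ s t, B (b s) (b t) = if s + t + 1 = 2 * r + 1 then c else 0) :
    Isometric k V (Fin (2 * r + 1) → k) B
      (diagForm k (2 * r + 1) (Fin.append (hypDiag k r) ![c⁻¹])) := by
  refine isometric_diagForm_of_orthogonal hrank B (fun i => ?_)
    (Fin.append (hyperbolicFamily (2 * r + 1) r c b) ![c⁻¹ • b r]) (fun i j => ?_)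
  · induction i using Fin.addCases <;> simp [hypDiag_ne_zero, hc]
  · have hmid : ∀ i, B (hyperbolicFamily (2 * r + 1) r c b i) (b r) = 0 ∧
        B (b r) (hyperbolicFamily (2 * r + 1) r c b i) = 0 := by
      intro i
      have hi := i.isLt
      simp only [hyperbolicFamily, map_add, map_smul, LinearMap.add_apply, LinearMap.smul_apply,
        hb, smul_eq_mul]
      constructor <;> rw [if_neg (by omega), if_neg (by omega)] <;> simp
    induction i using Fin.addCases with
    | left i =>
      induction j using Fin.addCases with
      | left j => simp [apply_hyperbolicFamily B h2 hc (by omega : 2 * r ≤ 2 * r + 1) hb]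
      | right j => simp [(hmid i).1, Fin.ext_iff]; omega
    | right i =>
      induction j using Fin.addCases with
      | left j => simp [(hmid j).2, Fin.ext_iff]; omega
      | right j =>
        simp [hb, Subsingleton.elim i j, ← two_mul]
        field_simp

end Antidiagonal

section Normalization

variable {R : Type*} [CommRing R] [Algebra k R] {θ : R} {m : ℕ} (ψ : R →ₗ[k] k)

theorem one_add_mul_mul_pow_pred (hθ : θ ^ m = 0) (q : R) :
    (1 + θ * q) * θ ^ (m - 1) = θ ^ (m - 1) := by
  have : θ ^ (m - 1 + 1) = 0 := pow_eq_zero_of_le (by omega) hθ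
  linear_combination q * this

/-- Downward induction on `s`: the correction `q ↦ q + t θ ^ j` changes `ψ ((1 + θ q) ^ 2 θ ^ s)`
only for `s + j + 1 ≥ m - 1`, and with the right `t` it kills the value at `s + j + 2 = m`. -/
theorem exists_apply_sq_mul_pow_eq_zero (h2 : (2 : k) ≠ 0) (hθ : θ ^ m = 0)
    (hψ : ψ (θ ^ (m - 1)) ≠ 0) :
    ∃ q : R, ∀ s, s + 1 < m → ψ ((1 + θ * q) ^ 2 * θ ^ s) = 0 := by
  suffices ∀ j, ∃ q : R, ∀ s, m ≤ s + j + 1 → s + 1 < m → ψ ((1 + θ * q) ^ 2 * θ ^ s) = 0 by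
    obtain ⟨q, hq⟩ := this m
    exact ⟨q, fun s hs => hq s (by omega) hs⟩
  intro j
  induction j with
  | zero => exact ⟨0, fun s h h' => absurd h' (by omega)⟩
  | succ j ih =>
    obtain ⟨q, hq⟩ := ih
    set t := -ψ ((1 + θ * q) ^ 2 * θ ^ (m - 2 - j)) / (2 * ψ (θ ^ (m - 1)))
    refine ⟨q + t • θ ^ j, fun s hs hsm => ?_⟩
    have hexpand : (1 + θ * (q + t • θ ^ j)) ^ 2 * θ ^ s = (1 + θ * q) ^ 2 * θ ^ s
        + (2 * t) • ((1 + θ * q) * θ ^ (s + j + 1)) + (t ^ 2) • θ ^ (s + 2 * j + 2) := by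
      simp only [Algebra.smul_def, map_mul, map_pow, map_ofNat]
      ring
    rw [hexpand, map_add, map_add, map_smul, map_smul,
      pow_eq_zero_of_le (n := s + 2 * j + 2) (by omega) hθ,
      map_zero, smul_zero, add_zero]
    by_cases hs' : m ≤ s + j + 1
    · rw [hq s hs' hsm, pow_eq_zero_of_le hs' hθ]
      simp
    · have ht : 2 * t * ψ (θ ^ (m - 1)) = -ψ ((1 + θ * q) ^ 2 * θ ^ (m - 2 - j)) := by
        simp only [t]
        field_simp
      rw [show s + j + 1 = m - 1 by omega, one_add_mul_mul_pow_pred hθ, smul_eq_mul, ht,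
        show s = m - 2 - j by omega, add_neg_cancel]

theorem exists_apply_mul_pow_mul_mul_pow (h2 : (2 : k) ≠ 0) (hθ : θ ^ m = 0)
    (hψ : ψ (θ ^ (m - 1)) ≠ 0) :
    ∃ p : R, ∀ s t, ψ (p * θ ^ s * (p * θ ^ t)) = if s + t + 1 = m then ψ (θ ^ (m - 1)) else 0 := by
  obtain ⟨q, hq⟩ := exists_apply_sq_mul_pow_eq_zero ψ h2 hθ hψ
  refine ⟨1 + θ * q, fun s t => ?_⟩
  rw [show (1 + θ * q) * θ ^ s * ((1 + θ * q) * θ ^ t) = (1 + θ * q) ^ 2 * θ ^ (s + t) by ring]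
  split_ifs with h
  · rw [show s + t = m - 1 by omega, sq, mul_assoc, one_add_mul_mul_pow_pred hθ,
      one_add_mul_mul_pow_pred hθ]
  · rcases lt_or_gt_of_ne h with h | h
    · exact hq _ h
    · rw [pow_eq_zero_of_le (by omega) hθ, mul_zero, map_zero]

end Normalization

theorem stmt3 (hchar : ringChar k ≠ 2) (a : k) (ha : a ≠ 0) (m : ℕ) (hm : 2 ≤ m)
    (f : Fin 1 → MvPolynomial (Fin 1) k) (hf : f = ![C a * X 0 ^ m]) :
    Nonempty (Q0 k f ≃ₐ[k] (Polynomial k ⧸ Ideal.span {(Polynomial.X : Polynomial k) ^ m})) ∧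
    ∀ A : Matrix (Fin 1) (Fin 1) (MvPolynomial (Fin 1) k), IsSocleMatrix k f A →
      ∀ φ : Q0 k f →ₗ[k] k, φ (toQ0 k f A.det) = 1 →
        (∀ r : ℕ, m = 2 * r →
          Isometric k (Q0 k f) (Fin (2 * r) → k) (beta k (V := Q0 k f) φ) (diagForm k (2 * r) (hypDiag k r))) ∧
        (∀ r : ℕ, m = 2 * r + 1 →
          Isometric k (Q0 k f) (Fin (2 * r + 1) → k) (beta k (V := Q0 k f) φ)
            (diagForm k (2 * r + 1) (Fin.append (hypDiag k r) ![a]))) := by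
  subst hf
  have h2 : (2 : k) ≠ 0 := Ring.two_ne_zero hchar
  set e := equivAdjoinRootXPow (m := m) ha
  set θ := AdjoinRoot.root (Polynomial.X ^ m : Polynomial k)
  refine ⟨⟨e⟩, fun A hA φ hφ => ?_⟩
  set ψ := φ ∘ₗ e.symm.toLinearMap
  have hE : e (toQ0 k _ A.det) = a • θ ^ (m - 1) := by
    rw [hA.det_eq_C_mul_X_pow (by omega), equivAdjoinRootXPow_toQ0]
    simp [Algebra.smul_def, θ]
  have hψ : ψ (θ ^ (m - 1)) = a⁻¹ := by
    refine eq_inv_of_mul_eq_one_right ?_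
    rw [← smul_eq_mul, ← map_smul, ← hE, ← hφ]
    simp [ψ]
  obtain ⟨p, hp⟩ := exists_apply_mul_pow_mul_mul_pow ψ h2 root_X_pow_pow_eq_zero
    (hψ ▸ inv_ne_zero ha)
  have hb (s t : ℕ) : beta k ψ (p * θ ^ s) (p * θ ^ t) = if s + t + 1 = m then a⁻¹ else 0 :=
    (hp s t).trans (by rw [hψ])
  have hβ := isometric_beta_algEquiv (k := k) (A := Q0 k _) e φ
  refine ⟨fun r hr => ?_, fun r hr => ?_⟩ <;> subst hr
  · exact hβ.trans (isometric_hyperbolic_of_antidiagonal _ h2 (inv_ne_zero ha)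
      finrank_adjoinRoot_X_pow hb)
  · simpa using hβ.trans (isometric_hyperbolic_append_of_antidiagonal _ h2 (inv_ne_zero ha)
      finrank_adjoinRoot_X_pow hb)

end EKL
end

section
/- Let k be a field with char(k) ≠ 2 and let f : 𝔸ⁿ → 𝔸ⁿ be a polynomial map vanishing at 0 with an isolated zero at 0 such that the ideal (f₁,…,fₙ) is contained in 𝔪² = (x₁,…,xₙ)². Then dim_k Q₀(f) ≥ 2ⁿ. -/
/-!
The Hilbert–Samuel function `H_J(t) = dim_k P/(J + 𝔪ᵗ)` satisfies
`H_J(t) ≤ H_J(t - 2) + H_{J + (g)}(t)` for `g ∈ 𝔪²`, since multiplication by `g` maps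
`P/(J + 𝔪ᵗ⁻²)` onto the kernel of `P/(J + 𝔪ᵗ) → P/(J + (g) + 𝔪ᵗ)`. The elements of `P` with
nonzero constant term are units modulo `𝔪ᵗ`, so `P/((f) + 𝔪ᵗ)` is a quotient of `Q₀(f)`.
Adding the `fᵢ` one at a time therefore gives
`C(t + n, n) = dim_k P/𝔪ᵗ⁺¹ ≤ dim_k Q₀(f) · C(⌊t/2⌋ + n, n)`,
and `C(2s + n, n) / C(s + n, n) → 2ⁿ`.
-/

open MvPolynomial Module

namespace EKL

variable (k : Type) [Field k]

open Filter Topology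

section LinearAlgebra

variable {k}

theorem finrank_le_add_of_ker_le_range {A B C : Type*} [AddCommGroup A] [Module k A]
    [AddCommGroup B] [Module k B] [AddCommGroup C] [Module k C]
    [FiniteDimensional k A] [FiniteDimensional k B]
    (φ : A →ₗ[k] B) (π : B →ₗ[k] C) (hπ : Function.Surjective π)
    (h : LinearMap.ker π ≤ LinearMap.range φ) :
    finrank k B ≤ finrank k A + finrank k C := by
  have hrank := LinearMap.finrank_range_add_finrank_ker π
  rw [LinearMap.range_eq_top.mpr hπ, finrank_top] at hrank
  have := Submodule.finrank_mono h
  have := LinearMap.finrank_range_le φ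
  omega

theorem finrank_quotient_le_add_of_mul_mem {R : Type*} [CommRing R] [Algebra k R]
    {I K : Ideal R} {g : R} [FiniteDimensional k (R ⧸ I)] [FiniteDimensional k (R ⧸ K)]
    (hK : ∀ x ∈ K, x * g ∈ I) :
    finrank k (R ⧸ I) ≤ finrank k (R ⧸ K) + finrank k (R ⧸ (I ⊔ Ideal.span {g})) := by
  let φ : R ⧸ K →ₗ[R] R ⧸ I :=
    K.liftQ (I.mkQ ∘ₗ LinearMap.mulRight R g) fun x hx => by
      simpa using (Submodule.Quotient.mk_eq_zero I).mpr (hK x hx)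
  refine finrank_le_add_of_ker_le_range (φ.restrictScalars k)
    (Ideal.Quotient.factorₐ k (le_sup_left : I ≤ I ⊔ Ideal.span {g})).toLinearMap
    (Ideal.Quotient.factor_surjective le_sup_left) ?_
  intro x hx
  obtain ⟨p, rfl⟩ := Ideal.Quotient.mk_surjective x
  have hp : p ∈ I ⊔ Ideal.span {g} := by
    simpa [Ideal.Quotient.eq_zero_iff_mem] using hx
  obtain ⟨a, ha, b, hb, rfl⟩ := Submodule.mem_sup.mp hp
  obtain ⟨q, rfl⟩ := Ideal.mem_span_singleton'.mp hb
  refine ⟨Ideal.Quotient.mk K q, ?_⟩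
  show Ideal.Quotient.mk I (q * g) = Ideal.Quotient.mk I (a + q * g)
  rw [Ideal.Quotient.eq]
  simpa using I.neg_mem ha

end LinearAlgebra

section Polynomial

variable {k} {σ : Type*}

open Finsupp in
theorem natCard_degree_le [Fintype σ] (t : ℕ) :
    Nat.card {x : σ →₀ ℕ | degree x ≤ t} = (t + Fintype.card σ).choose (Fintype.card σ) := by
  classical
  have hset : {x : σ →₀ ℕ | degree x ≤ t} =
      ↑((Finset.range (t + 1)).biUnion fun d => (Finset.univ : Finset σ).finsuppAntidiag d) := by
    ext x
    simp [Finset.mem_finsuppAntidiag, degree_eq_sum]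
  rw [hset, Nat.card_coe_set_eq, Set.ncard_coe_finset, Finset.card_biUnion]
  · simp [Finset.card_finsuppAntidiag_nat_eq_multichoose, Nat.sum_range_multichoose]
  · intro d _ e _ hde
    exact Finset.disjoint_left.mpr fun x hd he => hde <|
      (Finset.mem_finsuppAntidiag.mp hd).1.symm.trans (Finset.mem_finsuppAntidiag.mp he).1

/-- Below degree `t + 1` nothing is killed by `𝔪 ^ (t + 1)`, and everything above is. -/
noncomputable def restrictTotalDegreeEquivQuotient (t : ℕ) :
    restrictTotalDegree σ k t ≃ₗ[k] MvPolynomial σ k ⧸ idealOfVars σ k ^ (t + 1) :=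
  let F := (Ideal.Quotient.mkₐ k (idealOfVars σ k ^ (t + 1))).toLinearMap ∘ₗ
    (restrictTotalDegree σ k t).subtype
  LinearEquiv.ofBijective F <| by
    constructor
    · rw [← LinearMap.ker_eq_bot, eq_bot_iff]
      rintro ⟨p, hp⟩ hker
      have hpow : p ∈ idealOfVars σ k ^ (t + 1) := by
        simpa [F, Ideal.Quotient.eq_zero_iff_mem] using hker
      ext x
      by_contra hx
      have hlow : Finsupp.degree x ≤ t := hp (mem_support_iff.mpr hx)
      have := (mem_pow_idealOfVars_iff _ p).mp hpow x (mem_support_iff.mpr hx)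
      omega
    · intro y
      obtain ⟨p, rfl⟩ := Ideal.Quotient.mk_surjective y
      change Ideal.Quotient.mk _ p ∈ LinearMap.range F
      induction p using MvPolynomial.induction_on' with
      | monomial x c =>
        by_cases hx : Finsupp.degree x ≤ t
        · exact ⟨⟨monomial x c, (monomial_mem_restrictSupport (R := k)).mpr (.inl hx)⟩, rfl⟩
        · refine ⟨0, ?_⟩
          rw [map_zero, eq_comm, Ideal.Quotient.eq_zero_iff_mem, mem_pow_idealOfVars_iff]
          intro y hy
          rw [Finset.mem_singleton.mp (support_monomial_subset hy)]
          omega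
      | add p q hp hq => rw [map_add]; exact add_mem hp hq

instance [Finite σ] (t : ℕ) :
    Module.Finite k (MvPolynomial σ k ⧸ idealOfVars σ k ^ (t + 1)) :=
  .equiv (restrictTotalDegreeEquivQuotient t)

theorem finite_quotient_of_pow_le [Finite σ] {I : Ideal (MvPolynomial σ k)} {t : ℕ}
    (h : idealOfVars σ k ^ t ≤ I) : Module.Finite k (MvPolynomial σ k ⧸ I) :=
  have hle : idealOfVars σ k ^ (t + 1) ≤ I := (Ideal.pow_le_pow_right t.le_succ).trans h
  .of_surjective (Ideal.Quotient.factorₐ k hle).toLinearMap (Ideal.Quotient.factor_surjective hle)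

theorem finrank_quotient_pow_succ [Fintype σ] (t : ℕ) :
    finrank k (MvPolynomial σ k ⧸ idealOfVars σ k ^ (t + 1)) =
      (t + Fintype.card σ).choose (Fintype.card σ) := by
  rw [← (restrictTotalDegreeEquivQuotient t).finrank_eq]
  exact (finrank_eq_nat_card_basis (basisRestrictSupport k {x | Finsupp.degree x ≤ t})).trans
    (natCard_degree_le t)

theorem isUnit_mk_of_constantCoeff_ne_zero {I : Ideal (MvPolynomial σ k)} {t : ℕ}
    (hI : idealOfVars σ k ^ t ≤ I) {p : MvPolynomial σ k} (hp : constantCoeff p ≠ 0) :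
    IsUnit (Ideal.Quotient.mk I p) := by
  have hmem : p - C (constantCoeff p) ∈ idealOfVars σ k := by
    rw [← pow_one (idealOfVars σ k), mem_pow_idealOfVars_iff']
    intro x hx
    rw [Nat.lt_one_iff, Finsupp.degree_eq_zero_iff] at hx
    simp [hx, ← constantCoeff_eq]
  have hnil : IsNilpotent (Ideal.Quotient.mk I (p - C (constantCoeff p))) :=
    ⟨t, by rw [← map_pow, Ideal.Quotient.eq_zero_iff_mem]; exact hI (Ideal.pow_mem_pow hmem t)⟩
  simpa using hnil.isUnit_add_left_of_commute
    ((isUnit_iff_ne_zero.mpr hp).map ((Ideal.Quotient.mk I).comp C)) (Commute.all _ _)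

end Polynomial

section HilbertSamuel

variable {k} {σ : Type*}

noncomputable def hilbertSamuel (J : Ideal (MvPolynomial σ k)) (t : ℕ) : ℕ :=
  finrank k (MvPolynomial σ k ⧸ (J ⊔ idealOfVars σ k ^ t))

theorem hilbertSamuel_zero (J : Ideal (MvPolynomial σ k)) : hilbertSamuel J 0 = 0 := by
  rw [hilbertSamuel, pow_zero, Ideal.one_eq_top, sup_top_eq]
  exact finrank_zero_of_subsingleton

theorem hilbertSamuel_le_add [Finite σ] {J : Ideal (MvPolynomial σ k)} {g : MvPolynomial σ k}
    (hg : g ∈ idealOfVars σ k ^ 2) (t : ℕ) :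
    hilbertSamuel J t ≤ hilbertSamuel J (t - 2) + hilbertSamuel (J ⊔ Ideal.span {g}) t := by
  have := finite_quotient_of_pow_le (le_sup_right : idealOfVars σ k ^ t ≤ J ⊔ _)
  have := finite_quotient_of_pow_le (le_sup_right : idealOfVars σ k ^ (t - 2) ≤ J ⊔ _)
  have hmul : ∀ x ∈ J ⊔ idealOfVars σ k ^ (t - 2), x * g ∈ J ⊔ idealOfVars σ k ^ t := by
    intro x hx
    obtain ⟨a, ha, b, hb, rfl⟩ := Submodule.mem_sup.mp hx
    have hbg : b * g ∈ idealOfVars σ k ^ (t - 2 + 2) := by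
      rw [pow_add]; exact Ideal.mul_mem_mul hb hg
    rw [add_mul]
    exact add_mem (Ideal.mem_sup_left (J.mul_mem_right g ha))
      (Ideal.mem_sup_right (Ideal.pow_le_pow_right (by omega) hbg))
  have := finrank_quotient_le_add_of_mul_mem (k := k) hmul
  rwa [sup_right_comm] at this

theorem hilbertSamuel_succ_le_of_sup_span_singleton [Finite σ] {J : Ideal (MvPolynomial σ k)}
    {g : MvPolynomial σ k} (hg : g ∈ idealOfVars σ k ^ 2) {L j : ℕ}
    (h : ∀ t, hilbertSamuel (J ⊔ Ideal.span {g}) (t + 1) ≤ L * (t / 2 + j).choose j) :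
    ∀ t, hilbertSamuel J (t + 1) ≤ L * (t / 2 + (j + 1)).choose (j + 1)
  | 0 => (hilbertSamuel_le_add hg 1).trans (by simpa [hilbertSamuel_zero] using h 0)
  | 1 => (hilbertSamuel_le_add hg 2).trans (by simpa [hilbertSamuel_zero] using h 1)
  | t + 2 => by
    have hpascal : (t / 2 + 1 + (j + 1)).choose (j + 1) =
        (t / 2 + (j + 1)).choose (j + 1) + (t / 2 + 1 + j).choose j := by
      rw [show t / 2 + 1 + (j + 1) = t / 2 + 1 + j + 1 by ring, Nat.choose_succ_succ',
        show t / 2 + (j + 1) = t / 2 + 1 + j by ring, add_comm]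
    calc hilbertSamuel J (t + 2 + 1)
        ≤ hilbertSamuel J (t + 1) + hilbertSamuel (J ⊔ Ideal.span {g}) (t + 2 + 1) :=
          hilbertSamuel_le_add hg _
      _ ≤ L * (t / 2 + (j + 1)).choose (j + 1) + L * (t / 2 + 1 + j).choose j := by
          gcongr
          · exact hilbertSamuel_succ_le_of_sup_span_singleton hg h t
          · simpa [Nat.add_div_right] using h (t + 2)
      _ = L * ((t + 2) / 2 + (j + 1)).choose (j + 1) := by
          rw [Nat.add_div_right t two_pos, hpascal, mul_add]

theorem hilbertSamuel_succ_le_of_sup_span_range [Finite σ] {L j : ℕ}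
    {J : Ideal (MvPolynomial σ k)} {G : Fin j → MvPolynomial σ k}
    (hG : ∀ i, G i ∈ idealOfVars σ k ^ 2)
    (h : ∀ t, hilbertSamuel (J ⊔ Ideal.span (Set.range G)) t ≤ L) (t : ℕ) :
    hilbertSamuel J (t + 1) ≤ L * (t / 2 + j).choose j := by
  induction j generalizing J t with
  | zero => simpa using h (t + 1)
  | succ j ih =>
    refine hilbertSamuel_succ_le_of_sup_span_singleton (hG 0) (fun u => ?_) t
    refine ih (G := Fin.tail G) (fun i => hG _) (fun v => ?_) u
    rw [sup_assoc, ← Ideal.span_insert, ← Fin.range_fin_succ]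
    exact h v

end HilbertSamuel

theorem two_pow_le_of_choose_two_mul_add_le {n L : ℕ}
    (h : ∀ s, (2 * s + n).choose n ≤ L * (s + n).choose n) : 2 ^ n ≤ L := by
  have hratio : ∀ s : ℕ, ∏ i ∈ Finset.range n, ((2 * s + 1 + i : ℝ) / (s + 1 + i)) ≤ L := by
    intro s
    have hprod : ∏ i ∈ Finset.range n, (2 * s + 1 + i) ≤ L * ∏ i ∈ Finset.range n, (s + 1 + i) := by
      have := Nat.mul_le_mul_left n.factorial (h s)
      rwa [← Nat.ascFactorial_eq_factorial_mul_choose, mul_left_comm,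
        ← Nat.ascFactorial_eq_factorial_mul_choose, Nat.ascFactorial_eq_prod_range,
        Nat.ascFactorial_eq_prod_range] at this
    rw [Finset.prod_div_distrib, div_le_iff₀ (by positivity)]
    exact_mod_cast hprod
  have hfactor (i : ℕ) :
      Tendsto (fun s : ℕ => (2 * s + 1 + i : ℝ) / (s + 1 + i)) atTop (𝓝 2) := by
    have := (tendsto_natCast_div_add_atTop (1 + i : ℝ)).const_add 1
    rw [one_add_one_eq_two] at this
    -- `(2s + 1 + i) / (s + 1 + i) = 1 + s / (s + (1 + i))`
    refine this.congr fun s => ?_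
    field_simp
    ring
  have hlim := tendsto_finsetProd (Finset.range n) fun i _ => hfactor i
  rw [Finset.prod_const, Finset.card_range] at hlim
  exact_mod_cast le_of_tendsto' hlim hratio

section LocalAlgebra

variable {k}

theorem mIdeal_eq_idealOfVars (n : ℕ) : mIdeal k n = idealOfVars (Fin n) k := rfl

theorem finrank_quotient_le_finrank_Q0 {n : ℕ} (f : Fin n → MvPolynomial (Fin n) k)
    [FiniteDimensional k (Q0 k f)] {I : Ideal (MvPolynomial (Fin n) k)} {t : ℕ}
    (hf : ∀ i, f i ∈ I) (hI : idealOfVars (Fin n) k ^ t ≤ I) :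
    finrank k (MvPolynomial (Fin n) k ⧸ I) ≤ finrank k (Q0 k f) := by
  have hunit (s : S k n) : IsUnit (Ideal.Quotient.mkₐ k I s) :=
    isUnit_mk_of_constantCoeff_ne_zero hI s.2
  let ℓ : Loc k n →ₐ[k] MvPolynomial (Fin n) k ⧸ I := IsLocalization.liftAlgHom hunit
  have hker : idealOf k f ≤ RingHom.ker ℓ :=
    Ideal.span_le.mpr <| Set.range_subset_iff.mpr fun i => by
      simpa [ℓ, IsLocalization.lift_eq, Ideal.Quotient.eq_zero_iff_mem] using hf i
  let Φ : Q0 k f →ₐ[k] MvPolynomial (Fin n) k ⧸ I := Ideal.Quotient.liftₐ _ ℓ fun a ha => hker ha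
  refine LinearMap.finrank_le_finrank_of_surjective (f := Φ.toLinearMap) fun y => ?_
  obtain ⟨p, rfl⟩ := Ideal.Quotient.mk_surjective y
  exact ⟨Ideal.Quotient.mk _ (algebraMap _ _ p), IsLocalization.lift_eq hunit p⟩

end LocalAlgebra

theorem stmt11 (n : ℕ) (f : Fin n → MvPolynomial (Fin n) k)
    (hfd : FiniteDimensional k (Q0 k f))
    (hsub : Ideal.span (Set.range f) ≤ mIdeal k n ^ 2) :
    2 ^ n ≤ Module.finrank k (Q0 k f) := by
  rw [mIdeal_eq_idealOfVars] at hsub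
  refine two_pow_le_of_choose_two_mul_add_le fun s => ?_
  have hbound := hilbertSamuel_succ_le_of_sup_span_range (J := ⊥) (G := f)
    (fun i => hsub (Ideal.subset_span ⟨i, rfl⟩))
    (fun t => finrank_quotient_le_finrank_Q0 f
      (fun i => Ideal.mem_sup_left (Ideal.mem_sup_right (Ideal.subset_span ⟨i, rfl⟩)))
      le_sup_right) (2 * s)
  rwa [hilbertSamuel, bot_sup_eq, finrank_quotient_pow_succ, Fintype.card_fin,
    Nat.mul_div_cancel_left _ two_pos] at hbound

end EKL
end

section
/- Let k be a field with char(k) ≠ 2 and let f = (f₁,f₂) : 𝔸² → 𝔸² be a polynomial map with an isolated zero at 0 such that the ideal (f₁,f₂) is contained in 𝔪² = (x,y)² and dim_k Q₀(f) = 5. Then there exist elements h₁, h₂ ∈ Q₀(f) that are linearly independent over k and satisfy h₁² = h₂² = h₁h₂ = 0 in Q₀(f). -/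
open MvPolynomial Module

/-!
`Q₀(f)` is a local Artinian `k`-algebra whose maximal ideal `𝔫` is the image of `𝔪`. As
`(f₁, f₂) ⊆ 𝔪²`, `Q₀(f)/𝔫² ≅ P₀/𝔪²P₀ ≅ P/𝔪²` has dimension 3, so `dim 𝔫² = 2`. The powers of a
nilpotent ideal strictly decrease until they vanish, so `𝔫⁴ ≠ 0` would give `𝔫² ⊋ 𝔫³ ⊋ 𝔫⁴ ⊋ 0`
and `dim 𝔫² ≥ 3`. Hence `𝔫²·𝔫² = 0`, and any basis `h₁, h₂` of `𝔫²` works.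
-/

lemma Finsupp.degree_lt_two_iff {σ : Type*} {x : σ →₀ ℕ} :
    x.degree < 2 ↔ x = 0 ∨ ∃ i, x = Finsupp.single i 1 := by
  refine ⟨fun hx => ?_, ?_⟩
  · rcases eq_or_ne x 0 with rfl | hne
    · exact .inl rfl
    obtain ⟨i, hi⟩ := Finsupp.support_nonempty_iff.mpr hne
    have hsplit := Finsupp.single_add_erase i x
    have hdeg : x i + (x.erase i).degree = x.degree := by
      rw [← Finsupp.degree_single i (x i), ← map_add, hsplit]
    have hxi : x i = 1 := by
      have := Finsupp.mem_support_iff.mp hi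
      omega
    have herase : x.erase i = 0 := (Finsupp.degree_eq_zero_iff _).mp (by omega)
    exact .inr ⟨i, by rw [← hsplit, herase, add_zero, hxi]⟩
  · rintro (rfl | ⟨i, rfl⟩) <;> simp

namespace MvPolynomial

variable {σ R : Type*} [CommSemiring R]

lemma mem_idealOfVars_sq_iff {p : MvPolynomial σ R} :
    p ∈ idealOfVars σ R ^ 2 ↔ coeff 0 p = 0 ∧ ∀ i, coeff (Finsupp.single i 1) p = 0 := by
  simp only [mem_pow_idealOfVars_iff', Finsupp.degree_lt_two_iff]
  grind

lemma idealOfVars_eq_ker_constantCoeff :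
    idealOfVars σ R = RingHom.ker (constantCoeff : MvPolynomial σ R →+* R) := by
  ext p
  rw [RingHom.mem_ker, ← pow_one (idealOfVars σ R), mem_pow_idealOfVars_iff']
  simp [Finsupp.degree_eq_zero_iff, constantCoeff_eq]

lemma finrank_quotient_idealOfVars_sq {K : Type*} [Field K] [Fintype σ] :
    finrank K (MvPolynomial σ K ⧸ idealOfVars σ K ^ 2) = Fintype.card σ + 1 := by
  classical
  let L : MvPolynomial σ K →ₗ[K] K × (σ → K) :=
    (lcoeff K 0).prod (LinearMap.pi fun i => lcoeff K (Finsupp.single i 1))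
  have hker : LinearMap.ker L = (idealOfVars σ K ^ 2).restrictScalars K := by
    ext p
    simp [L, mem_idealOfVars_sq_iff, _root_.funext_iff, LinearMap.pi_apply]
  have hsurj : Function.Surjective L := by
    rintro ⟨a, v⟩
    refine ⟨C a + ∑ i, C (v i) * X i, ?_⟩
    ext i <;> simp [L, LinearMap.pi_apply, coeff_sum, coeff_X, Finsupp.single_eq_single_iff,
      eq_comm (a := (0 : σ →₀ ℕ))]
  have e := L.quotKerEquivOfSurjective hsurj
  rw [hker] at e
  refine e.finrank_eq.trans ?_
  simp [add_comm]

end MvPolynomial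

open IsLocalRing

lemma Ideal.pow_eq_bot_of_pow_succ_eq {R : Type*} [CommSemiring R] {J : Ideal R}
    (hJ : IsNilpotent J) {m : ℕ} (h : J ^ (m + 1) = J ^ m) : J ^ m = ⊥ := by
  obtain ⟨N, hN⟩ := hJ
  have hstable : ∀ j, J ^ (m + j) = J ^ m := fun j => by
    induction j with
    | zero => rfl
    | succ j ih => rw [← add_assoc, pow_succ, ih, ← pow_succ, h]
  rw [← hstable N, eq_bot_iff, ← Ideal.zero_eq_bot, ← hN]
  exact Ideal.pow_le_pow_right (Nat.le_add_left N m)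

lemma Ideal.pow_add_finrank_eq_bot {K A : Type*} [Field K] [CommRing A] [Algebra K A]
    [FiniteDimensional K A] {J : Ideal A} (hJ : IsNilpotent J) (m : ℕ) :
    J ^ (m + finrank K ↥(J ^ m)) = ⊥ := by
  set d := finrank K ↥(J ^ m)
  have hfinrank (I : Ideal A) : finrank K (I.restrictScalars K) = finrank K I := rfl
  suffices h : ∀ i, J ^ (m + i) = ⊥ ∨ finrank K ↥(J ^ (m + i)) + i ≤ d by
    rcases h d with h | h
    · exact h
    · have : finrank K ((J ^ (m + d)).restrictScalars K) = 0 := by rw [hfinrank]; omega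
      exact (Submodule.restrictScalars_eq_bot_iff K _ _).mp (Submodule.finrank_eq_zero.mp this)
  intro i
  induction i with
  | zero => exact .inr le_rfl
  | succ i ih =>
    by_cases hbot : J ^ (m + i) = ⊥
    · exact .inl (eq_bot_iff.mpr (hbot ▸ Ideal.pow_le_pow_right (Nat.le_succ _)))
    have hlt : (J ^ (m + i + 1)).restrictScalars K < (J ^ (m + i)).restrictScalars K := by
      refine lt_of_le_of_ne (Ideal.pow_le_pow_right (Nat.le_succ _)) fun heq => hbot ?_
      exact Ideal.pow_eq_bot_of_pow_succ_eq hJ (Submodule.restrictScalars_injective K _ _ heq)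
    have := Submodule.finrank_lt_finrank_of_lt hlt
    rw [hfinrank, hfinrank] at this
    have := ih.resolve_left hbot
    exact .inr (by rw [← add_assoc m i 1]; omega)

lemma Ideal.exists_linearIndependent_pair_of_mul_self_eq_bot {K A : Type*} [Field K] [CommRing A]
    [Algebra K A] {I : Ideal A} (hI : I * I = ⊥) (hrank : finrank K I = 2) :
    ∃ h₁ h₂ : A, LinearIndependent K ![h₁, h₂] ∧
      h₁ * h₁ = 0 ∧ h₂ * h₂ = 0 ∧ h₁ * h₂ = 0 := by
  replace hrank : finrank K (I.restrictScalars K) = 2 := hrank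
  have : Module.Finite K (I.restrictScalars K) := Module.finite_of_finrank_pos (by omega)
  let b := Module.finBasisOfFinrankEq K (I.restrictScalars K) hrank
  have hmul : ∀ i j, (b i : A) * b j = 0 := fun i j => by
    simpa [hI] using Ideal.mul_mem_mul (b i).2 (b j).2
  refine ⟨b 0, b 1, ?_, hmul 0 0, hmul 1 1, hmul 0 1⟩
  have hli := b.linearIndependent.map' _ (I.restrictScalars K).ker_subtype
  rwa [show ⇑(I.restrictScalars K).subtype ∘ ⇑b = ![(b 0 : A), b 1] by
    ext i; fin_cases i <;> rfl] at hli

lemma IsLocalRing.finrank_maximalIdeal_pow_add_finrank_quotient_of_le {K R : Type*} [Field K]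
    [CommRing R] [Algebra K R] [IsLocalRing R] {I : Ideal R} [IsLocalRing (R ⧸ I)]
    [FiniteDimensional K (R ⧸ I)] {m : ℕ} (hI : I ≤ maximalIdeal R ^ m) :
    finrank K ↥(maximalIdeal (R ⧸ I) ^ m) + finrank K (R ⧸ maximalIdeal R ^ m) =
      finrank K (R ⧸ I) := by
  rw [← ((maximalIdeal (R ⧸ I) ^ m).restrictScalars K).finrank_quotient_add_finrank, add_comm]
  congr 1
  rw [← map_maximalIdeal_of_surjective _ Ideal.Quotient.mk_surjective, ← Ideal.map_pow]
  exact ((DoubleQuot.quotQuotEquivQuotOfLEₐ K hI).toLinearEquiv.finrank_eq).symm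

lemma IsLocalRing.exists_linearIndependent_pair_mul_eq_zero {K A : Type*} [Field K]
    [CommRing A] [Algebra K A] [IsLocalRing A] [FiniteDimensional K A]
    (h : finrank K ↥(maximalIdeal A ^ 2) = 2) :
    ∃ h₁ h₂ : A, LinearIndependent K ![h₁, h₂] ∧
      h₁ * h₁ = 0 ∧ h₂ * h₂ = 0 ∧ h₁ * h₂ = 0 := by
  have : IsArtinianRing A := IsArtinianRing.of_finite K A
  have hnil : IsNilpotent (maximalIdeal A) :=
    (isArtinianRing_iff_isNilpotent_maximalIdeal A).mp inferInstance
  have h4 := Ideal.pow_add_finrank_eq_bot (K := K) hnil 2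
  rw [h, pow_add] at h4
  exact Ideal.exists_linearIndependent_pair_of_mul_self_eq_bot h4 h

namespace EKL

section

variable {k : Type} [Field k]

lemma mIdeal_eq_ker_constantCoeff (n : ℕ) :
    mIdeal k n = RingHom.ker (constantCoeff : MvPolynomial (Fin n) k →+* k) :=
  idealOfVars_eq_ker_constantCoeff

instance (n : ℕ) : (mIdeal k n).IsMaximal := by
  rw [mIdeal_eq_ker_constantCoeff]
  exact RingHom.ker_isMaximal_of_surjective _ fun a => ⟨C a, constantCoeff_C _ a⟩

instance (n : ℕ) : IsLocalization.AtPrime (Loc k n) (mIdeal k n) := by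
  have : S k n = (mIdeal k n).primeCompl := by
    ext p
    simp [S, Ideal.primeCompl, mIdeal_eq_ker_constantCoeff]
  rw [IsLocalization.AtPrime, ← this]
  infer_instance

instance (n : ℕ) : IsLocalRing (Loc k n) :=
  IsLocalization.AtPrime.isLocalRing (Loc k n) (mIdeal k n)

lemma finrank_loc_quotient_maximalIdeal_sq (n : ℕ) :
    finrank k (Loc k n ⧸ maximalIdeal (Loc k n) ^ 2) = n + 1 := by
  have e := IsLocalization.AtPrime.equivQuotMaximalIdealPow (mIdeal k n) (Loc k n) 2
  rw [← (e.restrictScalars k).toLinearEquiv.finrank_eq]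
  have := finrank_quotient_idealOfVars_sq (σ := Fin n) (K := k)
  rwa [Fintype.card_fin] at this

lemma idealOf_le_maximalIdeal_pow {n m : ℕ} {f : Fin n → MvPolynomial (Fin n) k}
    (hf : Ideal.span (Set.range f) ≤ mIdeal k n ^ m) :
    idealOf k f ≤ maximalIdeal (Loc k n) ^ m := by
  rw [← IsLocalization.AtPrime.map_eq_maximalIdeal (mIdeal k n), ← Ideal.map_pow, idealOf,
    Set.range_comp', ← Ideal.map_span]
  exact Ideal.map_mono hf

end

variable (k : Type) [Field k]

theorem stmt13 (f : Fin 2 → MvPolynomial (Fin 2) k)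
    (hsub : Ideal.span (Set.range f) ≤ mIdeal k 2 ^ 2)
    (hdim : Module.finrank k (Q0 k f) = 5) :
    ∃ h₁ h₂ : Q0 k f, LinearIndependent k ![h₁, h₂] ∧
      h₁ * h₁ = 0 ∧ h₂ * h₂ = 0 ∧ h₁ * h₂ = 0 := by
  have : Module.Finite k (Q0 k f) := Module.finite_of_finrank_pos (by omega)
  have : Nontrivial (Q0 k f) := Module.nontrivial_of_finrank_pos (R := k) (by omega)
  have : IsLocalRing (Q0 k f) := .of_surjective' _ Ideal.Quotient.mk_surjective
  have hsq : Module.finrank k ↥(maximalIdeal (Q0 k f) ^ 2) = 2 := by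
    -- restate the goal and `hdim` with the algebra instances of `Loc k 2 ⧸ idealOf k f`,
    -- which are defeq to, but not syntactically, those found for `Q0 k f`
    change Module.finrank k ↥(maximalIdeal (Loc k 2 ⧸ idealOf k f) ^ 2) = 2
    have h := finrank_maximalIdeal_pow_add_finrank_quotient_of_le (K := k)
      (idealOf_le_maximalIdeal_pow hsub)
    have hdim' : Module.finrank k (Loc k 2 ⧸ idealOf k f) = 5 := hdim
    rw [finrank_loc_quotient_maximalIdeal_sq] at h
    omega
  have key := IsLocalRing.exists_linearIndependent_pair_mul_eq_zero (K := k) (A := Q0 k f) hsq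
  obtain ⟨h₁, h₂, hli, h₁₁, h₂₂, h₁₂⟩ := key
  exact ⟨h₁, h₂, hli, h₁₁, h₂₂, h₁₂⟩

end EKL
end

section
/- Let k be a field with char(k) ≠ 2 and let q be a nondegenerate quadratic form over k of rank at least 2 that is anisotropic, i.e., q admits no nonzero vector v with q(v) = 0. Then for every n ≥ 1, every polynomial map f : 𝔸ⁿ → 𝔸ⁿ vanishing at 0 with an isolated zero at 0, and every k-linear φ : Q₀(f) → k with φ(E) = 1, the EKL form β_φ is not isometric to q. In particular, if −1 is not a square in k, the form ⟨1,1⟩ is not realizable as an EKL form at 0. -/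
open MvPolynomial Module

namespace EKL

variable (k : Type) [Field k]

/-- A bilinear form is symmetric. -/
def IsSymmForm {V : Type} [AddCommGroup V] [Module k V]
    (B : V →ₗ[k] V →ₗ[k] k) : Prop :=
  ∀ v w, B v w = B w v

/-- A bilinear form is nondegenerate. -/
def IsNondegForm {V : Type} [AddCommGroup V] [Module k V]
    (B : V →ₗ[k] V →ₗ[k] k) : Prop :=
  ∀ v, (∀ w, B v w = 0) → v = 0

end EKL

/-!
Since f vanishes at the origin, Q₀(f) is a local artinian k-algebra whose residue map is evaluation
at 0, with values in k. If dim Q₀(f) ≥ 2 this map has a nonzero kernel, so the maximal ideal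
contains a nonzero nilpotent x; its last nonzero power w satisfies w ≠ 0 and w² = 0. Then
β_φ(w, w) = φ(w²) = 0 for every φ, so β_φ is isotropic, while q is not.
-/

theorem exists_ne_zero_mul_self_eq_zero_of_isNilpotent {R : Type*} [CommRing R] {x : R}
    (hx : IsNilpotent x) (hx0 : x ≠ 0) : ∃ w : R, w ≠ 0 ∧ w * w = 0 := by
  have : Nontrivial R := ⟨⟨x, 0, hx0⟩⟩
  have hclass : 2 ≤ nilpotencyClass x := by
    have := pos_nilpotencyClass_iff.mpr hx
    have : nilpotencyClass x ≠ 1 := by simpa using hx0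
    omega
  refine ⟨x ^ (nilpotencyClass x - 1), pow_pred_nilpotencyClass hx, ?_⟩
  rw [← pow_add]
  exact pow_eq_zero_of_le (by omega) (pow_nilpotencyClass hx)

theorem exists_ne_zero_mul_self_eq_zero_of_two_le_finrank {K Q : Type*} [Field K] [CommRing Q]
    [IsLocalRing Q] [Algebra K Q] [FiniteDimensional K Q] (ε : Q →ₐ[K] K)
    (hrank : 2 ≤ finrank K Q) : ∃ w : Q, w ≠ 0 ∧ w * w = 0 := by
  have hker : 0 < finrank K (LinearMap.ker ε.toLinearMap) := by
    have := LinearMap.finrank_range_add_finrank_ker ε.toLinearMap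
    have := (LinearMap.range ε.toLinearMap).finrank_le
    rw [finrank_self] at this
    omega
  obtain ⟨⟨v, hv⟩, hv0⟩ := Module.finrank_pos_iff_exists_ne_zero.mp hker
  have hεv : ε v = 0 := hv
  have : IsArtinianRing Q := IsArtinianRing.of_finite K Q
  have hnil : IsNilpotent v := Ring.KrullDimLE.isNilpotent_iff_mem_nonunits.mpr fun hu ↦
    not_isUnit_zero (hεv ▸ hu.map ε)
  exact exists_ne_zero_mul_self_eq_zero_of_isNilpotent hnil (by simpa using hv0)

namespace EKL

variable (k : Type) [Field k]

theorem not_isometric_beta_of_anisotropic {Q V : Type} [CommRing Q] [IsLocalRing Q] [Algebra k Q]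
    [AddCommGroup V] [Module k V] (ε : Q →ₐ[k] k) (φ : Q →ₗ[k] k) (q : V →ₗ[k] V →ₗ[k] k)
    (hrank : 2 ≤ finrank k V) (haniso : ∀ v : V, q v v = 0 → v = 0) :
    ¬ Isometric k Q V (beta k φ) q := by
  rintro ⟨e, he⟩
  have : FiniteDimensional k V := Module.finite_of_finrank_pos (by omega)
  have : FiniteDimensional k Q := e.symm.finiteDimensional
  obtain ⟨w, hw0, hww⟩ :=
    exists_ne_zero_mul_self_eq_zero_of_two_le_finrank ε (e.finrank_eq ▸ hrank)
  refine hw0 (e.map_eq_zero_iff.mp (haniso _ ?_))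
  simp [he, beta, hww]

-- `S k n` is by definition the complement of the prime ideal `ker constantCoeff`.
instance inst_s18 (n : ℕ) : IsLocalRing (Loc k n) := by
  set 𝔭 := RingHom.ker (constantCoeff : MvPolynomial (Fin n) k →+* k)
  have : 𝔭.IsPrime := RingHom.ker_isPrime _
  have : IsLocalization.AtPrime (Loc k n) 𝔭 := Localization.isLocalization (M := S k n)
  exact IsLocalization.AtPrime.isLocalRing (Loc k n) 𝔭

noncomputable def Loc.evalZero (n : ℕ) : Loc k n →ₐ[k] k :=
  IsLocalization.liftAlgHom (M := S k n) (f := aeval 0) fun s ↦ by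
    rw [aeval_zero, Algebra.algebraMap_self, RingHom.id_apply]
    exact isUnit_iff_ne_zero.mpr s.2

theorem Loc.evalZero_algebraMap {n : ℕ} (p : MvPolynomial (Fin n) k) :
    Loc.evalZero k n (algebraMap _ _ p) = constantCoeff p := by
  simp [Loc.evalZero, IsLocalization.liftAlgHom_apply]

theorem idealOf_le_ker_evalZero {n : ℕ} (f : Fin n → MvPolynomial (Fin n) k)
    (hf0 : ∀ i, constantCoeff (f i) = 0) : idealOf k f ≤ RingHom.ker (Loc.evalZero k n) := by
  rw [idealOf, Ideal.span_le]
  rintro _ ⟨i, rfl⟩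
  simp [Loc.evalZero_algebraMap, hf0 i]

noncomputable def Q0.evalZero {n : ℕ} (f : Fin n → MvPolynomial (Fin n) k)
    (hf0 : ∀ i, constantCoeff (f i) = 0) : Q0 k f →ₐ[k] k :=
  Ideal.Quotient.liftₐ _ (Loc.evalZero k n) fun _ ha ↦ idealOf_le_ker_evalZero k f hf0 ha

theorem Q0.not_isometric_beta_of_anisotropic {V : Type} [AddCommGroup V] [Module k V] {n : ℕ}
    (f : Fin n → MvPolynomial (Fin n) k) (hf0 : ∀ i, constantCoeff (f i) = 0)
    (φ : Q0 k f →ₗ[k] k) (q : V →ₗ[k] V →ₗ[k] k)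
    (hrank : 2 ≤ finrank k V) (haniso : ∀ v : V, q v v = 0 → v = 0) :
    ¬ Isometric k (Q0 k f) V (beta k (V := Q0 k f) φ) q := by
  rintro ⟨e, he⟩
  have : Nontrivial (Q0 k f) := Module.nontrivial_of_finrank_pos (R := k) (e.finrank_eq ▸ by omega)
  have : IsLocalRing (Q0 k f) :=
    .of_surjective' (Ideal.Quotient.mk (idealOf k f)) Ideal.Quotient.mk_surjective
  exact EKL.not_isometric_beta_of_anisotropic k (Q := Q0 k f) (Q0.evalZero k f hf0) φ q hrank
    haniso ⟨e, he⟩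

theorem diagForm_one_one_anisotropic (hsq : ¬ ∃ c : k, c * c = -1) (v : Fin 2 → k)
    (hv : diagForm k 2 ![1, 1] v v = 0) : v = 0 := by
  simp only [diagForm, LinearMap.mk₂_apply, Fin.sum_univ_two, Matrix.cons_val_zero,
    Matrix.cons_val_one, one_mul] at hv
  by_cases h1 : v 1 = 0
  · rw [h1, mul_zero, add_zero, mul_self_eq_zero] at hv
    ext i; fin_cases i <;> simp [hv, h1]
  · exact absurd ⟨v 0 / v 1, by field_simp; linear_combination hv⟩ hsq

theorem stmt18 :
    (∀ (V : Type) [AddCommGroup V] [Module k V],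
      ∀ q : V →ₗ[k] V →ₗ[k] k, FiniteDimensional k V → 2 ≤ Module.finrank k V →
        IsSymmForm k q → IsNondegForm k q → (∀ v : V, q v v = 0 → v = 0) →
        ∀ (n : ℕ) (f : Fin n → MvPolynomial (Fin n) k),
          (∀ i, constantCoeff (f i) = 0) → FiniteDimensional k (Q0 k f) →
          ∀ A : Matrix (Fin n) (Fin n) (MvPolynomial (Fin n) k), IsSocleMatrix k f A →
          ∀ φ : Q0 k f →ₗ[k] k, φ (toQ0 k f A.det) = 1 →
            ¬ Isometric k (Q0 k f) V (beta k (V := Q0 k f) φ) q) ∧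
    ((¬ ∃ c : k, c * c = -1) →
      ∀ (n : ℕ) (f : Fin n → MvPolynomial (Fin n) k),
        (∀ i, constantCoeff (f i) = 0) → FiniteDimensional k (Q0 k f) →
        ∀ A : Matrix (Fin n) (Fin n) (MvPolynomial (Fin n) k), IsSocleMatrix k f A →
        ∀ φ : Q0 k f →ₗ[k] k, φ (toQ0 k f A.det) = 1 →
          ¬ Isometric k (Q0 k f) (Fin 2 → k) (beta k (V := Q0 k f) φ) (diagForm k 2 ![1, 1])) :=
  ⟨fun _ _ _ q _ hrank _ _ haniso _ f hf0 _ _ _ φ _ ↦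
      Q0.not_isometric_beta_of_anisotropic k f hf0 φ q hrank haniso,
    fun hsq _ f hf0 _ _ _ φ _ ↦
      Q0.not_isometric_beta_of_anisotropic k f hf0 φ _ (by simp)
        (diagForm_one_one_anisotropic k hsq)⟩

end EKL
end
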